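/- arXiv:2409.00450 — 7 statements merged into one kernel-verified Lean document; each statement's English description precedes it below -/
import Mathlib

section
/- Let $m \ge 1$ be an integer, let $\{i_1,\dots,i_k\}$ be an increasing sequence of integers in $[1,m]$, let $a>2$ and $b>1$, and let $\alpha = (a+\sqrt{a^2-4})/2$. Suppose $(q_i)_{i=0}^{m+1}$ is a real sequence with $q_0=1$, $0\le q_i\le 1$ for all $1\le i\le m+1$, $q_i \ge a^{-1}(q_{i-1}+q_{i+1})$ for all $1\le i\le m$ with $i\notin\{i_1,\dots,i_k\}$, and $q_i \ge a^{-1}b(q_{i-1}+q_{i+1})$ for all $1\le i\le m$ with $i\in\{i_1,\dots,i_k\}$. Then $q_m \ge b^k(\alpha-1)\alpha^{-m-1}$. -/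
theorem stmt0 (m : ℕ) (hm : 1 ≤ m) (S : Finset ℕ) (hS : S ⊆ Finset.Icc 1 m)
    (a b : ℝ) (ha : 2 < a) (hb : 1 < b)
    (α : ℝ) (hα : α = (a + Real.sqrt (a ^ 2 - 4)) / 2)
    (q : ℕ → ℝ) (h0 : q 0 = 1)
    (hbound : ∀ i, 1 ≤ i → i ≤ m + 1 → 0 ≤ q i ∧ q i ≤ 1)
    (hrec1 : ∀ i, 1 ≤ i → i ≤ m → i ∉ S → a⁻¹ * (q (i - 1) + q (i + 1)) ≤ q i)
    (hrec2 : ∀ i, 1 ≤ i → i ≤ m → i ∈ S → a⁻¹ * b * (q (i - 1) + q (i + 1)) ≤ q i) :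
    b ^ S.card * (α - 1) / α ^ (m + 1) ≤ q m := by
  have ha0 : (0:ℝ) < a := by linarith
  have hs2 : Real.sqrt (a ^ 2 - 4) ^ 2 = a ^ 2 - 4 :=
    Real.sq_sqrt (by nlinarith)
  have hs0 : 0 < Real.sqrt (a ^ 2 - 4) :=
    Real.sqrt_pos.mpr (by nlinarith)
  have hα1 : 1 < α := by rw [hα]; nlinarith
  have hα0 : 0 < α := by linarith
  have hq2 : α * α = a * α - 1 := by rw [hα]; nlinarith
  have hb0 : (0:ℝ) < b := by linarith
  -- main induction
  have key : ∀ i, i ≤ m →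
      b ^ (S ∩ Finset.Icc 1 i).card * (α - 1) + α ^ i * q (i + 1) ≤ α ^ (i + 1) * q i := by
    intro i
    induction i with
    | zero =>
      intro _
      have h1 := hbound 1 le_rfl (by omega)
      have he : Finset.Icc 1 0 = (∅ : Finset ℕ) := by decide
      rw [he, Finset.inter_empty, Finset.card_empty, pow_zero, pow_zero, pow_one, h0]
      linarith [h1.2]
    | succ i ih =>
      intro hle
      have him := ih (by omega)
      have hP : (0:ℝ) < α ^ i := pow_pos hα0 i
      have hq0 : 0 ≤ q (i + 1) := (hbound (i+1) (by omega) (by omega)).1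
      have hq0' : 0 ≤ q (i + 2) := (hbound (i+2) (by omega) (by omega)).1
      have hIcc : Finset.Icc 1 (i + 1) = insert (i + 1) (Finset.Icc 1 i) := by
        ext x; simp [Finset.mem_Icc, Finset.mem_insert]; omega
      have hnot : (i + 1) ∉ Finset.Icc 1 i := by simp
      by_cases hmem : i + 1 ∈ S
      · have hcard : (S ∩ Finset.Icc 1 (i + 1)).card = (S ∩ Finset.Icc 1 i).card + 1 := by
          rw [hIcc, Finset.inter_insert_of_mem hmem,
            Finset.card_insert_of_notMem (by simp)]
        have hr := hrec2 (i + 1) (by omega) (by omega) hmem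
        simp only [Nat.add_sub_cancel] at hr
        have hr' : b * (q i + q (i + 2)) ≤ a * q (i + 1) := by
          rw [mul_assoc, inv_mul_le_iff₀ ha0] at hr
          linarith
        rw [hcard]
        have e1 : b * (b ^ (S ∩ Finset.Icc 1 i).card * (α - 1) + α ^ i * q (i + 1))
            ≤ b * (α ^ (i+1) * q i) := by
          exact mul_le_mul_of_nonneg_left him (le_of_lt hb0)
        have e2 : α ^ i * α * (b * (q i + q (i + 2)))
            ≤ α ^ i * α * (a * q (i + 1)) :=
          mul_le_mul_of_nonneg_left hr' (le_of_lt (mul_pos hP hα0))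
        have e4 : α ^ i * α * (a * q (i + 1))
            = α ^ i * α * α * q (i + 1) + α ^ i * q (i + 1) := by
          linear_combination (-(α ^ i * q (i + 1))) * hq2
        have e3 : 0 ≤ (b - 1) * (α ^ i) * (q (i+1) + α * q (i+2)) := by
          apply mul_nonneg (mul_nonneg (by linarith) hP.le)
          have := mul_nonneg hα0.le hq0'
          linarith
        have hqe : q (i + 1 + 1) = q (i + 2) := rfl
        have hp1 : α ^ (i+1) = α ^ i * α := pow_succ α i
        have hp2 : α ^ (i+2) = α ^ i * α * α := by rw [pow_succ, pow_succ]
        rw [hp1] at e1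
        rw [hqe, hp1, hp2, pow_succ]
        nlinarith [e1, e2, e3, e4]
      · have hcard : (S ∩ Finset.Icc 1 (i + 1)).card = (S ∩ Finset.Icc 1 i).card := by
          rw [hIcc, Finset.inter_insert_of_notMem hmem]
        have hr := hrec1 (i + 1) (by omega) (by omega) hmem
        simp only [Nat.add_sub_cancel] at hr
        have hr' : q i + q (i + 2) ≤ a * q (i + 1) := by
          rw [inv_mul_le_iff₀ ha0] at hr; exact hr
        rw [hcard]
        have e2 : α ^ i * α * (q i + q (i + 2))
            ≤ α ^ i * α * (a * q (i + 1)) :=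
          mul_le_mul_of_nonneg_left hr' (le_of_lt (mul_pos hP hα0))
        have e4 : α ^ i * α * (a * q (i + 1))
            = α ^ i * α * α * q (i + 1) + α ^ i * q (i + 1) := by
          linear_combination (-(α ^ i * q (i + 1))) * hq2
        have hqe : q (i + 1 + 1) = q (i + 2) := rfl
        have hp1 : α ^ (i+1) = α ^ i * α := pow_succ α i
        have hp2 : α ^ (i+2) = α ^ i * α * α := by rw [pow_succ, pow_succ]
        rw [hp1] at him
        rw [hqe, hp1, hp2]
        nlinarith [him, e2, e4]
  have hfin := key m le_rfl
  rw [Finset.inter_eq_left.mpr hS] at hfin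
  have hq0 : 0 ≤ q (m + 1) := (hbound (m+1) (by omega) (by omega)).1
  have hpow : (0:ℝ) < α ^ (m + 1) := pow_pos hα0 _
  rw [div_le_iff₀ hpow]
  nlinarith [mul_nonneg (le_of_lt (pow_pos hα0 m)) hq0]
end

section
/- Let $a>2$, $m \ge 1$ an integer, and $\alpha = (a+\sqrt{a^2-4})/2$. Suppose $(q_i)_{i=0}^{m+1}$ is a real sequence with $q_0=1$, $0\le q_{m+1}\le (a-1)q_m$, $0\le q_i\le 1$ for all $1\le i\le m$, and $q_i = a^{-1}(q_{i-1}+q_{i+1})$ for all $1\le i\le m$. Then $q_m \le (\alpha+1-a)^{-1}\alpha^{-m+1}$. -/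
theorem stmt1 (a : ℝ) (ha : 2 < a) (m : ℕ) (hm : 1 ≤ m)
    (α : ℝ) (hα : α = (a + Real.sqrt (a ^ 2 - 4)) / 2)
    (q : ℕ → ℝ) (h0 : q 0 = 1)
    (hend0 : 0 ≤ q (m + 1)) (hend1 : q (m + 1) ≤ (a - 1) * q m)
    (hbound : ∀ i, 1 ≤ i → i ≤ m → 0 ≤ q i ∧ q i ≤ 1)
    (hrec : ∀ i, 1 ≤ i → i ≤ m → q i = a⁻¹ * (q (i - 1) + q (i + 1))) :
    q m ≤ (α + 1 - a)⁻¹ * (α / α ^ m) := by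
  set s := Real.sqrt (a ^ 2 - 4) with hs
  have hs2 : s ^ 2 = a ^ 2 - 4 := Real.sq_sqrt (by nlinarith)
  have hs0 : 0 ≤ s := Real.sqrt_nonneg _
  have ha0 : (0:ℝ) < a := by linarith
  have hα1 : 1 < α := by rw [hα]; nlinarith
  have hα0 : (0:ℝ) < α := by linarith
  have hαeq : α ^ 2 = a * α - 1 := by rw [hα]; nlinarith
  have hgap : 0 < α + 1 - a := by
    rw [hα]
    have : a - 2 < s := by nlinarith
    linarith
  -- q (i+1) = a * q i - q (i-1)
  have hrec' : ∀ i, 1 ≤ i → i ≤ m → q (i + 1) = a * q i - q (i - 1) := by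
    intro i h1 h2
    have := hrec i h1 h2
    field_simp at this
    linarith
  have key : ∀ i, i ≤ m → q (i + 1) - α * q i = (q 1 - α) / α ^ i := by
    intro i
    induction i with
    | zero => intro _; simp [h0]
    | succ n ih =>
      intro hn
      have hnm : n ≤ m := by omega
      have hprev := ih hnm
      have hr := hrec' (n + 1) (by omega) hn
      simp only [Nat.add_sub_cancel] at hr
      have hinv : (a - α) * α = 1 := by nlinarith
      rw [hr]
      have hαpow : α ^ (n + 1) = α ^ n * α := pow_succ α n
      rw [hαpow]
      field_simp
      field_simp at hprev
      linear_combination α ^ n * q (n + 1) * hinv + hprev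
  have hkm := key m le_rfl
  have hq1 : 0 ≤ q 1 := (hbound 1 le_rfl hm).1
  have hpow : 0 < α ^ m := pow_pos hα0 m
  have h2 : (α + 1 - a) * q m ≤ (α - q 1) / α ^ m := by
    have hx : (q 1 - α) / α ^ m = -((α - q 1) / α ^ m) := by ring
    linarith
  have h3 : (α - q 1) / α ^ m ≤ α / α ^ m :=
    div_le_div_of_nonneg_right (by linarith) hpow.le
  rw [inv_mul_eq_div, le_div_iff₀ hgap]
  linarith
end

section
/- Fix a metric space $(V, \mathbf{d})$ with basepoint $\mathbf{0} \in V$ and a constant $L \ge 1$. For a finite set $A \subseteq V$, define $\mathfrak{D}(A)$ to be the collection of nonempty proper subsets $D \subsetneq A$ with $\mathbf{0} \notin D$ and $\mathbf{d}(D, A \setminus D) > L \cdot \max(\mathrm{diam}(D), 1)$; call $A$ packed if $\mathfrak{D}(A) = \emptyset$ and sparse otherwise. Then for every finite sparse set $A$, there exists a packed set $D \in \mathfrak{D}(A)$. -/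
noncomputable def setDist {V : Type*} [MetricSpace V] (D E : Set V) : ℝ :=
  sInf (Set.image2 dist D E)

/-- `D` witnesses that `A` is sparse: it is a nonempty proper subset of `A`
avoiding the basepoint `o`, whose distance to its complement in `A` exceeds
`L * max (diam D) 1`. -/
def SparseWitness {V : Type*} [MetricSpace V] (o : V) (L : ℝ) (A D : Set V) : Prop :=
  D.Nonempty ∧ D ⊆ A ∧ D ≠ A ∧ o ∉ D ∧
    setDist D (A \ D) > L * max (Metric.diam D) 1

/-- `A` is packed if it admits no sparse witness. -/
def IsPacked {V : Type*} [MetricSpace V] (o : V) (L : ℝ) (A : Set V) : Prop :=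
  ∀ D : Set V, ¬ SparseWitness o L A D

lemma bddBelow_image2_dist {V : Type*} [MetricSpace V] (D E : Set V) :
    BddBelow (Set.image2 dist D E) := by
  refine ⟨0, fun x hx => ?_⟩
  obtain ⟨a, ha, b, hb, rfl⟩ := hx
  exact dist_nonneg

lemma setDist_le_dist {V : Type*} [MetricSpace V] {D E : Set V} {x y : V}
    (hx : x ∈ D) (hy : y ∈ E) : setDist D E ≤ dist x y :=
  csInf_le (bddBelow_image2_dist D E) (Set.mem_image2_of_mem hx hy)

lemma setDist_mono_left {V : Type*} [MetricSpace V] {D D' E : Set V}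
    (h : D' ⊆ D) (hD' : D'.Nonempty) (hE : E.Nonempty) :
    setDist D E ≤ setDist D' E := by
  apply csInf_le_csInf (bddBelow_image2_dist D E)
  · exact Set.Nonempty.image2 hD' hE
  · exact Set.image2_subset h le_rfl

lemma stmt5_aux {V : Type*} [MetricSpace V] (o : V) (L : ℝ) (hL : 1 ≤ L) :
    ∀ n (A : Set V), A.Finite → A.ncard ≤ n → ¬ IsPacked o L A →
      ∃ D : Set V, SparseWitness o L A D ∧ IsPacked o L D := by
  intro n
  induction n with
  | zero =>
    intro A hA hcard hsp
    exfalso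
    apply hsp
    intro D ⟨hne, hsub, hneq, _, _⟩
    have : A = ∅ := (Set.ncard_eq_zero hA).mp (Nat.le_zero.mp hcard)
    exact hneq (le_antisymm hsub (this ▸ (Set.empty_subset _))) |>.elim
  | succ n ih =>
    intro A hA hcard hsp
    rw [IsPacked] at hsp
    push_neg at hsp
    obtain ⟨D, hD⟩ := hsp
    by_cases hpack : IsPacked o L D
    · exact ⟨D, hD, hpack⟩
    · obtain ⟨hne, hsub, hneq, ho, hdist⟩ := hD
      have hDfin : D.Finite := hA.subset hsub
      have hDlt : D.ncard < A.ncard :=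
        Set.ncard_lt_ncard (lt_of_le_of_ne hsub hneq) hA
      obtain ⟨D', ⟨hne', hsub', hneq', ho', hdist'⟩, hpack'⟩ :=
        ih D hDfin (by omega) hpack
      have hsubA : D' ⊆ A := hsub'.trans hsub
      have hADne : (A \ D).Nonempty := by
        rw [Set.diff_nonempty]
        intro h; exact hneq (le_antisymm hsub h)
      have hdiamle : Metric.diam D' ≤ Metric.diam D :=
        Metric.diam_mono hsub' hDfin.isBounded
      have hmaxle : L * max (Metric.diam D') 1 ≤ L * max (Metric.diam D) 1 := by
        apply mul_le_mul_of_nonneg_left (max_le_max hdiamle le_rfl) (by linarith)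
      refine ⟨D', ⟨hne', hsubA, ?_, ho', ?_⟩, hpack'⟩
      · rintro rfl
        exact hneq (le_antisymm hsub hsub')
      · -- setDist D' (A \ D') > L * max (diam D') 1
        have hb : L * max (Metric.diam D') 1 < setDist D' (A \ D) :=
          lt_of_le_of_lt hmaxle
            (lt_of_lt_of_le hdist (setDist_mono_left hsub' hne' hADne))
        have key : ∀ z ∈ Set.image2 dist D' (A \ D'),
            L * max (Metric.diam D') 1 < z := by
          rintro z ⟨x, hx, y, hy, rfl⟩
          by_cases hyD : y ∈ D
          · have : y ∈ D \ D' := ⟨hyD, hy.2⟩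
            exact lt_of_lt_of_le hdist' (setDist_le_dist hx this)
          · have : y ∈ A \ D := ⟨hy.1, hyD⟩
            exact lt_of_lt_of_le hb (setDist_le_dist hx this)
        have hADne' : (A \ D').Nonempty := hADne.mono (Set.diff_subset_diff_right hsub')
        have hne2 : (Set.image2 dist D' (A \ D')).Nonempty :=
          Set.Nonempty.image2 hne' hADne'
        have hfin : (Set.image2 dist D' (A \ D')).Finite :=
          Set.Finite.image2 _ (hA.subset hsubA) hA.diff
        exact key _ (hne2.csInf_mem hfin)

theorem stmt5 {V : Type*} [MetricSpace V] (o : V) (L : ℝ) (hL : 1 ≤ L)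
    (A : Set V) (hA : A.Finite) (hsparse : ¬ IsPacked o L A) :
    ∃ D : Set V, SparseWitness o L A D ∧ IsPacked o L D :=
  stmt5_aux o L hL A.ncard A hA le_rfl hsparse
end

section
/- Fix a metric space $(V, \mathbf{d})$ with basepoint $\mathbf{0}$ and constant $L \ge 1$, with the notion of packed sets as above. Let $D_1, D_2 \subseteq V$ be disjoint finite packed sets with $\mathbf{0} \notin D_1 \cup D_2$, such that $\mathbf{d}(D_1, D_2) \le L \cdot \max(\mathrm{diam}(D_i), 1)$ for both $i \in \{1,2\}$. Then $D_1 \cup D_2$ is packed. -/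
lemma setDist_comm' {V : Type*} [MetricSpace V] (D E : Set V) :
    setDist D E = setDist E D := by
  unfold setDist
  congr 1
  ext r
  constructor <;> rintro ⟨x, hx, y, hy, rfl⟩
  · exact ⟨y, hy, x, hx, dist_comm y x⟩
  · exact ⟨y, hy, x, hx, dist_comm y x⟩

lemma setDist_mono' {V : Type*} [MetricSpace V] {A B A' B' : Set V}
    (hA : A' ⊆ A) (hB : B' ⊆ B) (hA' : A'.Nonempty) (hB' : B'.Nonempty) :
    setDist A B ≤ setDist A' B' := by
  apply csInf_le_csInf
  · exact ⟨0, by rintro r ⟨x, _, y, _, rfl⟩; exact dist_nonneg⟩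
  · obtain ⟨a, ha⟩ := hA'; obtain ⟨b, hb⟩ := hB'
    exact ⟨dist a b, a, ha, b, hb, rfl⟩
  · rintro r ⟨x, hx, y, hy, rfl⟩
    exact ⟨x, hA hx, y, hB hy, rfl⟩

theorem stmt6 {V : Type*} [MetricSpace V] (o : V) (L : ℝ) (hL : 1 ≤ L)
    (D1 D2 : Set V) (h1 : D1.Finite) (h2 : D2.Finite) (hdisj : Disjoint D1 D2)
    (hp1 : IsPacked o L D1) (hp2 : IsPacked o L D2) (ho : o ∉ D1 ∪ D2)
    (hd1 : setDist D1 D2 ≤ L * max (Metric.diam D1) 1)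
    (hd2 : setDist D1 D2 ≤ L * max (Metric.diam D2) 1) :
    IsPacked o L (D1 ∪ D2) := by
  rintro K ⟨hKne, hKsub, hKprop, hKo, hKdist⟩
  have hL0 : 0 ≤ L := le_trans zero_le_one hL
  have hKbdd : Bornology.IsBounded K := ((h1.union h2).subset hKsub).isBounded
  -- general step: if K ∩ Di is a nonempty proper subset of Di, it is a sparse witness
  have key : ∀ (Di Dj : Set V), Di ∪ Dj = D1 ∪ D2 → (K ∩ Di).Nonempty →
      K ∩ Di ≠ Di → SparseWitness o L Di (K ∩ Di) := by
    intro Di Dj huni hne hprop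
    refine ⟨hne, Set.inter_subset_right, hprop, fun h => hKo h.1, ?_⟩
    have hsub1 : Di \ (K ∩ Di) ⊆ (D1 ∪ D2) \ K := by
      rintro x ⟨hx, hx'⟩
      refine ⟨huni ▸ Set.mem_union_left _ hx, fun hxK => hx' ⟨hxK, hx⟩⟩
    have hne2 : (Di \ (K ∩ Di)).Nonempty := by
      rw [Set.diff_nonempty]
      intro hcon
      exact hprop (le_antisymm Set.inter_subset_right hcon)
    have hmono : setDist K ((D1 ∪ D2) \ K) ≤ setDist (K ∩ Di) (Di \ (K ∩ Di)) :=
      setDist_mono' Set.inter_subset_left hsub1 hne hne2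
    have hdiam : Metric.diam (K ∩ Di) ≤ Metric.diam K :=
      Metric.diam_mono Set.inter_subset_left hKbdd
    have : L * max (Metric.diam (K ∩ Di)) 1 ≤ L * max (Metric.diam K) 1 :=
      mul_le_mul_of_nonneg_left (max_le_max hdiam le_rfl) hL0
    linarith [hKdist, hmono]
  have hK12 : K = (K ∩ D1) ∪ (K ∩ D2) := by
    rw [← Set.inter_union_distrib_left]
    exact (Set.inter_eq_left.mpr hKsub).symm
  by_cases hc1 : (K ∩ D1).Nonempty ∧ K ∩ D1 ≠ D1
  · exact hp1 _ (key D1 D2 rfl hc1.1 hc1.2)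
  by_cases hc2 : (K ∩ D2).Nonempty ∧ K ∩ D2 ≠ D2
  · exact hp2 _ (key D2 D1 (Set.union_comm _ _) hc2.1 hc2.2)
  push_neg at hc1 hc2
  -- now K ∩ D1 is ∅ or D1, K ∩ D2 is ∅ or D2
  have e1 : K ∩ D1 = ∅ ∨ K ∩ D1 = D1 := by
    rcases Set.eq_empty_or_nonempty (K ∩ D1) with h | h
    · exact Or.inl h
    · exact Or.inr (hc1 h)
  have e2 : K ∩ D2 = ∅ ∨ K ∩ D2 = D2 := by
    rcases Set.eq_empty_or_nonempty (K ∩ D2) with h | h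
    · exact Or.inl h
    · exact Or.inr (hc2 h)
  rcases e1 with e1 | e1 <;> rcases e2 with e2 | e2
  · rw [hK12, e1, e2, Set.empty_union] at hKne
    exact hKne.ne_empty rfl
  · -- K = D2
    have hK : K = D2 := by rw [hK12, e1, e2, Set.empty_union]
    have hcompl : (D1 ∪ D2) \ K = D1 := by
      rw [hK, Set.union_diff_right]
      exact hdisj.sdiff_eq_left
    rw [hK] at hcompl
    rw [hK, hcompl, setDist_comm'] at hKdist
    linarith
  · have hK : K = D1 := by rw [hK12, e1, e2, Set.union_empty]
    have hcompl : (D1 ∪ D2) \ K = D2 := by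
      rw [hK, Set.union_comm, Set.union_diff_right]
      exact hdisj.symm.sdiff_eq_left
    rw [hK] at hcompl
    rw [hK, hcompl] at hKdist
    linarith
  · have hK : K = D1 ∪ D2 := by rw [hK12, e1, e2]
    exact hKprop hK
end

section
/- Fix a metric space $(V, \mathbf{d})$ with basepoint $\mathbf{0}$ and constant $L \ge 1$. Let $A$ be a finite packed set and $D \subsetneq A$ with $\mathbf{0} \notin A \setminus D$, and suppose $D$ is prior in $A$ (a maximal packed proper subset of $A$ which either contains $\mathbf{0}$ or has $\mathrm{diam}(D) \ge \mathrm{diam}(\hat D)$ for every packed proper subset $\hat D \subsetneq A$). Then for every packed proper subset $F \subsetneq A \setminus D$ we have $\mathbf{d}(F, D) > L \cdot \max(\mathrm{diam}(F), 1)$. -/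
/-- `D` is a maximal packed proper subset of `A`. -/
def MaximalPacked {V : Type*} [MetricSpace V] (o : V) (L : ℝ) (A D : Set V) : Prop :=
  D ⊂ A ∧ IsPacked o L D ∧ ∀ D' : Set V, D ⊂ D' → D' ⊂ A → ¬ IsPacked o L D'

/-- `D` is prior in `A`: a maximal packed proper subset which either contains
the basepoint or has maximal diameter among packed proper subsets of `A`. -/
def Prior {V : Type*} [MetricSpace V] (o : V) (L : ℝ) (A D : Set V) : Prop :=
  MaximalPacked o L A D ∧
    (o ∈ D ∨ ∀ D' : Set V, D' ⊂ A → IsPacked o L D' → Metric.diam D' ≤ Metric.diam D)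

lemma setDist_mono'_s7 {V : Type*} [MetricSpace V] {D E D' E' : Set V}
    (hD : D' ⊆ D) (hE : E' ⊆ E) (hD' : D'.Nonempty) (hE' : E'.Nonempty) :
    setDist D E ≤ setDist D' E' := by
  apply csInf_le_csInf
  · refine ⟨0, fun x hx => ?_⟩
    obtain ⟨a, _, b, _, rfl⟩ := hx
    exact dist_nonneg
  · exact Set.Nonempty.image2 hD' hE'
  · exact Set.image2_subset hD hE

theorem stmt7 {V : Type*} [MetricSpace V] (o : V) (L : ℝ) (hL : 1 ≤ L)
    (A : Set V) (hA : A.Finite) (hpA : IsPacked o L A)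
    (D : Set V) (hD : D ⊂ A) (ho : o ∉ A \ D) (hprior : Prior o L A D) :
    ∀ F : Set V, F ⊂ A \ D → F.Nonempty → IsPacked o L F →
      setDist F D > L * max (Metric.diam F) 1 := by
  intro F hF hFne hpF
  by_contra hcon
  push_neg at hcon
  have hAbd : Bornology.IsBounded A := hA.isBounded
  have hFA : F ⊆ A := hF.1.trans (Set.diff_subset)
  have hdisj : ∀ x ∈ F, x ∉ D := fun x hx => (hF.1 hx).2
  -- D ∪ F is strictly between D and A
  obtain ⟨f, hfF⟩ := hFne
  have hDsub : D ⊂ D ∪ F := by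
    constructor
    · exact Set.subset_union_left
    · intro h
      exact hdisj f hfF (h (Set.mem_union_right D hfF))
  obtain ⟨a, haAD, haF⟩ := Set.exists_of_ssubset hF
  have hDFA : D ∪ F ⊂ A := by
    constructor
    · exact Set.union_subset hD.1 hFA
    · intro h
      rcases h haAD.1 with h' | h'
      · exact haAD.2 h'
      · exact haF h'
  have hnp : ¬ IsPacked o L (D ∪ F) := hprior.1.2.2 _ hDsub hDFA
  simp only [IsPacked, not_forall, not_not] at hnp
  obtain ⟨E, hEne, hEsub, hEneq, hoE, hEdist⟩ := hnp
  have hEA : E ⊆ A := hEsub.trans hDFA.1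
  -- helper: a proper-split in D gives contradiction
  by_cases h1 : (E ∩ D).Nonempty ∧ (D \ E).Nonempty
  · obtain ⟨h1a, h1b⟩ := h1
    apply hprior.1.2.1 (E ∩ D)
    refine ⟨h1a, Set.inter_subset_right, ?_, fun h => hoE h.1, ?_⟩
    · intro h
      obtain ⟨y, hyD, hyE⟩ := h1b
      rw [← h] at hyD
      exact hyE hyD.1
    · have hsub1 : D \ (E ∩ D) = D \ E := by
        ext x; simp [Set.mem_diff, Set.mem_inter_iff]
      rw [hsub1]
      have step1 : setDist E ((D ∪ F) \ E) ≤ setDist (E ∩ D) (D \ E) :=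
        setDist_mono'_s7 Set.inter_subset_left
          (Set.diff_subset_diff_left Set.subset_union_left) h1a h1b
      have hdiam : Metric.diam (E ∩ D) ≤ Metric.diam E :=
        Metric.diam_mono Set.inter_subset_left (hAbd.subset hEA)
      have : L * max (Metric.diam (E ∩ D)) 1 ≤ L * max (Metric.diam E) 1 := by
        apply mul_le_mul_of_nonneg_left _ (le_trans zero_le_one hL)
        exact max_le_max hdiam le_rfl
      linarith [hEdist]
  by_cases h2 : (E ∩ F).Nonempty ∧ (F \ E).Nonempty
  · obtain ⟨h2a, h2b⟩ := h2
    apply hpF (E ∩ F)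
    refine ⟨h2a, Set.inter_subset_right, ?_, fun h => hoE h.1, ?_⟩
    · intro h
      obtain ⟨y, hyF, hyE⟩ := h2b
      rw [← h] at hyF
      exact hyE hyF.1
    · have hsub1 : F \ (E ∩ F) = F \ E := by
        ext x; simp [Set.mem_diff, Set.mem_inter_iff]
      rw [hsub1]
      have step1 : setDist E ((D ∪ F) \ E) ≤ setDist (E ∩ F) (F \ E) :=
        setDist_mono'_s7 Set.inter_subset_left
          (Set.diff_subset_diff_left Set.subset_union_right) h2a h2b
      have hdiam : Metric.diam (E ∩ F) ≤ Metric.diam E :=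
        Metric.diam_mono Set.inter_subset_left (hAbd.subset hEA)
      have : L * max (Metric.diam (E ∩ F)) 1 ≤ L * max (Metric.diam E) 1 := by
        apply mul_le_mul_of_nonneg_left _ (le_trans zero_le_one hL)
        exact max_le_max hdiam le_rfl
      linarith [hEdist]
  -- now E = D or E = F
  push_neg at h1 h2
  have hcases : E = D ∨ E = F := by
    by_cases hED : (E ∩ D).Nonempty
    · have hDE : D ⊆ E := by
        by_contra hc
        obtain ⟨y, hyD, hyE⟩ := Set.not_subset.mp hc
        exact absurd (h1 hED) (Set.nonempty_iff_ne_empty.mp ⟨y, hyD, hyE⟩)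
      by_cases hEF : (E ∩ F).Nonempty
      · have hFE : F ⊆ E := by
          by_contra hc
          obtain ⟨y, hyF, hyE⟩ := Set.not_subset.mp hc
          exact absurd (h2 hEF) (Set.nonempty_iff_ne_empty.mp ⟨y, hyF, hyE⟩)
        exact absurd (Set.Subset.antisymm hEsub (Set.union_subset hDE hFE)) hEneq
      · left
        rw [Set.not_nonempty_iff_eq_empty] at hEF
        apply Set.Subset.antisymm _ hDE
        intro x hxE
        rcases hEsub hxE with h | h
        · exact h
        · have hx : x ∈ E ∩ F := ⟨hxE, h⟩
          rw [hEF] at hx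
          exact hx.elim
    · right
      rw [Set.not_nonempty_iff_eq_empty] at hED
      have hEF : E ⊆ F := by
        intro x hxE
        rcases hEsub hxE with h | h
        · have hx : x ∈ E ∩ D := ⟨hxE, h⟩
          rw [hED] at hx
          exact hx.elim
        · exact h
      apply Set.Subset.antisymm hEF
      by_contra hc
      obtain ⟨y, hyF, hyE⟩ := Set.not_subset.mp hc
      have := h2 ⟨hEne.some, hEne.some_mem, hEF hEne.some_mem⟩
      exact absurd this (Set.nonempty_iff_ne_empty.mp ⟨y, hyF, hyE⟩)
  have hDFcompl : (D ∪ F) \ D = F := by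
    ext x
    simp only [Set.mem_diff, Set.mem_union]
    constructor
    · rintro ⟨h | h, h'⟩
      · exact absurd h h'
      · exact h
    · intro h
      exact ⟨Or.inr h, hdisj x h⟩
  have hFDcompl : (D ∪ F) \ F = D := by
    ext x
    simp only [Set.mem_diff, Set.mem_union]
    constructor
    · rintro ⟨h | h, h'⟩
      · exact h
      · exact absurd h h'
    · intro h
      exact ⟨Or.inl h, fun h' => hdisj x h' h⟩
  rcases hcases with rfl | rfl
  · -- E = D, use priority
    have hmax : ∀ D' : Set V, D' ⊂ A → IsPacked o L D' → Metric.diam D' ≤ Metric.diam E := by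
      rcases hprior.2 with h | h
      · exact absurd h hoE
      · exact h
    have hFssA : F ⊂ A := lt_of_lt_of_le (lt_of_lt_of_le hF (Set.diff_subset : A \ E ⊆ A)) le_rfl
    have hdiamF : Metric.diam F ≤ Metric.diam E := hmax F hFssA hpF
    rw [hDFcompl] at hEdist
    have hsymm : setDist E F = setDist F E := setDist_comm' E F
    have : L * max (Metric.diam F) 1 ≤ L * max (Metric.diam E) 1 := by
      apply mul_le_mul_of_nonneg_left _ (le_trans zero_le_one hL)
      exact max_le_max hdiamF le_rfl
    linarith
  · -- E = F
    rw [hFDcompl] at hEdist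
    linarith
end

section
/- Let $L \ge 10$ and $c = \log_2(L+2)$. For every integer $k \ge 2$ and every real $t \in [1, k/2]$, one has $(k-t)^c + (L+1)t^c \le (L+2)(k/2)^c = k^c \cdot (L+2)/2^c = k^c$. -/
theorem stmt10 (L : ℝ) (hL : 10 ≤ L) (c : ℝ) (hc : c = Real.logb 2 (L + 2))
    (k : ℕ) (hk : 2 ≤ k) (t : ℝ) (ht1 : 1 ≤ t) (ht2 : t ≤ (k : ℝ) / 2) :
    ((k : ℝ) - t) ^ c + (L + 1) * t ^ c ≤ (L + 2) * ((k : ℝ) / 2) ^ c ∧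
      (L + 2) * ((k : ℝ) / 2) ^ c = (k : ℝ) ^ c := by
  have hL2 : (0:ℝ) < L + 2 := by linarith
  have hc2 : (2:ℝ) ^ c = L + 2 := by
    rw [hc, Real.rpow_logb two_pos (by norm_num) hL2]
  have hcge2 : (2:ℝ) ≤ c := by
    rw [hc, Real.le_logb_iff_rpow_le one_lt_two hL2]
    rw [show ((2:ℝ):ℝ) = ((2:ℕ):ℝ) by norm_num, Real.rpow_natCast]
    norm_num; linarith
  have hc1 : (1:ℝ) ≤ c := by linarith
  have hk2 : (2:ℝ) ≤ (k:ℝ) := by exact_mod_cast hk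
  have hk0 : (0:ℝ) ≤ (k:ℝ) := by linarith
  have hhalf : (1:ℝ) ≤ (k:ℝ) / 2 := by linarith
  -- second conjunct
  have heq : (L + 2) * ((k : ℝ) / 2) ^ c = (k : ℝ) ^ c := by
    rw [Real.div_rpow hk0 (by norm_num), hc2]
    field_simp
  refine ⟨?_, heq⟩
  -- key endpoint bound: f(1) ≤ k^c
  have hf1 : ((k:ℝ) - 1) ^ c + (L + 1) * 1 ^ c ≤ (k:ℝ) ^ c := by
    rw [Real.one_rpow, mul_one]
    rcases eq_or_lt_of_le hk2 with h2 | h3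
    · rw [← h2]
      norm_num [Real.one_rpow, hc2.symm]; linarith [hc2]
    · have hk3 : (3:ℝ) ≤ (k:ℝ) := by
        have : 3 ≤ k := by exact_mod_cast (by exact_mod_cast h3 : (2:ℕ) < k)
        exact_mod_cast this
      set a : ℝ := (k:ℝ) - 1 with ha
      have ha2 : (2:ℝ) ≤ a := by simp [ha]; linarith
      have ha0 : (0:ℝ) < a := by linarith
      have hbern : 1 + c * (1/a) ≤ (1 + 1/a) ^ c :=
        one_add_mul_self_le_rpow_one_add (le_trans (by norm_num : (-1:ℝ) ≤ 0) (by positivity)) hc1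
      have hmul : a ^ c * (1 + c * (1/a)) ≤ a ^ c * (1 + 1/a) ^ c :=
        mul_le_mul_of_nonneg_left hbern (by positivity)
      have hrhs : a ^ c * (1 + 1/a) ^ c = (k:ℝ) ^ c := by
        rw [← Real.mul_rpow (le_of_lt ha0) (by positivity)]
        congr 1
        field_simp
        simp only [ha]
        ring
      have hlhs : a ^ c * (1 + c * (1/a)) = a ^ c + c * a ^ (c - 1) := by
        rw [Real.rpow_sub ha0, Real.rpow_one]
        field_simp
      have hpow : (L + 2) / 2 ≤ a ^ (c - 1) := by
        have h1 : (2:ℝ) ^ (c - 1) ≤ a ^ (c - 1) :=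
          Real.rpow_le_rpow (by norm_num) ha2 (by linarith)
        have h2 : (2:ℝ) ^ (c - 1) = (L + 2) / 2 := by
          rw [Real.rpow_sub two_pos, Real.rpow_one, hc2]
        linarith
      have hLc : L + 1 ≤ c * a ^ (c - 1) := by
        have : 2 * ((L + 2)/2) ≤ c * a ^ (c - 1) :=
          mul_le_mul hcge2 hpow (by linarith) (by linarith)
        linarith
      calc a ^ c + (L + 1) ≤ a ^ c + c * a ^ (c - 1) := by linarith
        _ = a ^ c * (1 + c * (1/a)) := hlhs.symm
        _ ≤ a ^ c * (1 + 1/a) ^ c := hmul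
        _ = (k:ℝ) ^ c := hrhs
  -- convexity
  have hIcc : Convex ℝ (Set.Icc (1:ℝ) ((k:ℝ)/2)) := convex_Icc _ _
  have hrp : ConvexOn ℝ (Set.Ici (0:ℝ)) (fun x : ℝ => x ^ c) := convexOn_rpow hc1
  have hsub0 : Set.Icc (1:ℝ) ((k:ℝ)/2) ⊆ Set.Ici (0:ℝ) := fun x hx => by
    have := hx.1; simp; linarith
  have hconv2 : ConvexOn ℝ (Set.Icc (1:ℝ) ((k:ℝ)/2)) (fun x : ℝ => (L+1) * x ^ c) := by
    have := (hrp.smul (c := L + 1) (by linarith)).subset hsub0 hIcc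
    simpa [smul_eq_mul] using this
  have hconv1 : ConvexOn ℝ (Set.Icc (1:ℝ) ((k:ℝ)/2)) (fun x : ℝ => ((k:ℝ) - x) ^ c) := by
    have haff := hrp.comp_affineMap (AffineMap.lineMap ((k:ℝ)) ((k:ℝ)-1))
    have heqf : ((fun x : ℝ => x ^ c) ∘ ⇑(AffineMap.lineMap ((k:ℝ)) ((k:ℝ)-1)))
        = fun x : ℝ => ((k:ℝ) - x) ^ c := by
      funext x
      simp [AffineMap.lineMap_apply, smul_eq_mul]
      ring_nf
    rw [heqf] at haff
    refine haff.subset ?_ hIcc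
    intro x hx
    simp only [Set.mem_preimage, AffineMap.lineMap_apply, smul_eq_mul, Set.mem_Ici, vsub_eq_sub, vadd_eq_add]
    have := hx.2
    simp only [Set.mem_Icc] at hx
    have : x ≤ (k:ℝ)/2 := hx.2
    nlinarith [hx.1]
  have hconv := hconv1.add hconv2
  have hseg : t ∈ segment ℝ (1:ℝ) ((k:ℝ)/2) := by
    rw [segment_eq_Icc hhalf]; exact ⟨ht1, ht2⟩
  have hmax := hconv.le_on_segment (Set.left_mem_Icc.mpr hhalf)
    (Set.right_mem_Icc.mpr hhalf) hseg
  have hfhalf : ((k:ℝ) - (k:ℝ)/2) ^ c + (L + 1) * ((k:ℝ)/2) ^ c = (L + 2) * ((k:ℝ)/2) ^ c := by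
    rw [show (k:ℝ) - (k:ℝ)/2 = (k:ℝ)/2 by ring]; ring
  have h1le : ((k:ℝ) - 1) ^ c + (L + 1) * 1 ^ c ≤ (L + 2) * ((k:ℝ)/2) ^ c := by
    rw [heq]; exact hf1
  calc ((k : ℝ) - t) ^ c + (L + 1) * t ^ c
      ≤ max (((k:ℝ) - 1) ^ c + (L + 1) * 1 ^ c)
          (((k:ℝ) - (k:ℝ)/2) ^ c + (L + 1) * ((k:ℝ)/2) ^ c) := hmax
    _ ≤ (L + 2) * ((k:ℝ)/2) ^ c := max_le h1le (le_of_eq hfhalf)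
end

section
/- In a simple locally finite graph $G$ where every vertex has degree $d$, let $\eta = (x_0, x_1, \dots, x_n)$ be a path of length $n$ (each $x_i \sim x_{i+1}$) and consider the simple random walk started at $x_0$. Suppose that whenever the walk is at an interior vertex $x_i$ ($1 \le i \le n-1$), the probability of hitting $x_n$ before exiting the vertex set of $\eta$ satisfies $q_i \ge d^{-1}(q_{i-1} + q_{i+1})$, where $q_i$ denotes the probability starting from $x_{n-i}$ of hitting $x_n$ before the outer boundary of the range of $\eta$, and $q_0 = 1$, $q_{n+1} = 0$. Then $q_n \ge (\alpha - 1)\alpha^{-n-1}$ where $\alpha = (d + \sqrt{d^2-4})/2$, assuming $d > 2$. In particular, the probability that the simple random walk started at $x_0$ hits $x_n$ before hitting the outer boundary of the range of $\eta$ is at least $(\alpha-1)\alpha^{-n-1}$. -/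
theorem stmt15 {V : Type*} (G : SimpleGraph V) [G.LocallyFinite]
    (d : ℕ) (hd : 2 < d) (hreg : G.IsRegularOfDegree d)
    {x y : V} (w : G.Walk x y) (n : ℕ) (hn : w.length = n)
    (α : ℝ) (hα : α = ((d : ℝ) + Real.sqrt ((d : ℝ) ^ 2 - 4)) / 2)
    -- `q i` is the probability that the simple random walk started at the
    -- vertex `w.getVert (n - i)` hits `y` before the outer boundary of the
    -- vertex range of `w`; in particular `q n` is this hitting probability
    -- for the walk started at `x`.
    (q : ℕ → ℝ) (h0 : q 0 = 1) (hend : q (n + 1) = 0)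
    (hbound : ∀ i, 0 ≤ q i ∧ q i ≤ 1)
    (hrec : ∀ i, 1 ≤ i → i ≤ n → (d : ℝ)⁻¹ * (q (i - 1) + q (i + 1)) ≤ q i) :
    (α - 1) / α ^ (n + 1) ≤ q n := by
  have hd2 : (2:ℝ) < (d:ℝ) := by exact_mod_cast hd
  have hsnn : 0 ≤ Real.sqrt ((d:ℝ)^2 - 4) := Real.sqrt_nonneg _
  have hs : Real.sqrt ((d:ℝ)^2 - 4) ^ 2 = (d:ℝ)^2 - 4 := by
    exact Real.sq_sqrt (by nlinarith)
  have hα1 : 1 < α := by rw [hα]; nlinarith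
  have hα0 : 0 < α := by linarith
  have hαne : α ≠ 0 := ne_of_gt hα0
  have hquad : α ^ 2 - (d:ℝ) * α + 1 = 0 := by rw [hα]; nlinarith [hs]
  have hdeq : (d:ℝ) = α + α⁻¹ := by
    field_simp
    nlinarith [hquad]
  have hd0 : (0:ℝ) < (d:ℝ) := by linarith
  have key : ∀ i, i ≤ n → (α - 1) / α ^ i ≤ α * q i - q (i+1) := by
    intro i
    induction i with
    | zero =>
      intro _
      have := (hbound 1).2
      simp only [pow_zero, div_one, h0, mul_one]
      linarith
    | succ j ih =>
      intro hj
      have hj' : j ≤ n := Nat.le_of_succ_le hj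
      have h1 := ih hj'
      have h2 := hrec (j+1) (by omega) hj
      simp only [Nat.add_sub_cancel] at h2
      have h3 : q j + q (j+1+1) ≤ (d:ℝ) * q (j+1) := by
        have := mul_le_mul_of_nonneg_left h2 hd0.le
        calc q j + q (j+1+1) = (d:ℝ) * ((d:ℝ)⁻¹ * (q j + q (j+1+1))) := by
              field_simp
          _ ≤ (d:ℝ) * q (j+1) := this
      rw [hdeq, add_mul] at h3
      have h4 : α⁻¹ * (α * q j - q (j+1)) = q j - α⁻¹ * q (j+1) := by
        field_simp
      have h5 : α⁻¹ * ((α - 1) / α ^ j) ≤ α⁻¹ * (α * q j - q (j+1)) :=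
        mul_le_mul_of_nonneg_left h1 (inv_nonneg.mpr hα0.le)
      have h6 : (α - 1) / α ^ (j+1) = α⁻¹ * ((α - 1) / α ^ j) := by
        rw [pow_succ, ← div_div, div_eq_inv_mul]
      rw [h6]
      rw [h4] at h5
      linarith
  have hkey := key n le_rfl
  rw [hend] at hkey
  have h7 : (α - 1) / α ^ (n+1) = α⁻¹ * ((α - 1) / α ^ n) := by
    rw [pow_succ, ← div_div, div_eq_inv_mul]
  have h8 : α⁻¹ * ((α - 1) / α ^ n) ≤ α⁻¹ * (α * q n - 0) :=
    mul_le_mul_of_nonneg_left hkey (inv_nonneg.mpr hα0.le)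
  have h9 : α⁻¹ * (α * q n - 0) = q n := by field_simp; ring
  rw [h7]
  linarith [h8, h9.le, h9.ge]
end
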